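/- The Jacobi theta function θ(τ) = Σ_{n∈ℤ} e^{2πi n² τ} is non-vanishing on the complex upper half-plane: for every τ with Im(τ) > 0, θ(τ) ≠ 0. -/
import Mathlib

open Complex

namespace JacobiThetaNeZero

open Real

private lemma summable_norm_theta {σ : ℂ} (hσ : 0 < σ.im) :
    Summable fun n : ℤ => ‖cexp (π * I * (n : ℂ) ^ 2 * σ)‖ := by
  have hlt : rexp (-π * σ.im) < 1 :=
    Real.exp_lt_one_iff.mpr (mul_neg_of_neg_of_pos (neg_lt_zero.mpr Real.pi_pos) hσ)
  have hgeo : Summable fun k : ℕ => rexp (-π * σ.im) ^ k :=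
    summable_geometric_of_lt_one (Real.exp_pos _).le hlt
  refine Summable.of_nonneg_of_le (fun n => norm_nonneg _) (fun n => norm_exp_mul_sq_le hσ n) ?_
  refine Summable.of_nat_of_neg ?_ ?_ <;> simpa using hgeo

private lemma cexp_pi_I_int (m : ℤ) : cexp (π * I * m) = (-1 : ℂ) ^ m := by
  rw [show (π : ℂ) * I * m = (m : ℂ) * (π * I) by ring, Complex.exp_int_mul,
    Complex.exp_pi_mul_I]

private lemma neg_one_zpow_sq (r : ℤ) : (-1 : ℂ) ^ (r ^ 2) = (-1 : ℂ) ^ r := by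
  rcases Int.even_or_odd r with h | h
  · rw [(Int.even_pow.mpr ⟨h, two_ne_zero⟩).neg_one_zpow, h.neg_one_zpow]
  · rw [(h.pow).neg_one_zpow, h.neg_one_zpow]

private lemma g_eq (σ : ℂ) (a : ℤ) :
    cexp (π * I * (a : ℂ) ^ 2 * (σ + 1)) = cexp (π * I * (a : ℂ) ^ 2 * σ) * (-1 : ℂ) ^ a := by
  rw [show (π : ℂ) * I * (a : ℂ) ^ 2 * (σ + 1)
      = π * I * (a : ℂ) ^ 2 * σ + π * I * ((a ^ 2 : ℤ) : ℂ) by push_cast; ring,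
    Complex.exp_add, cexp_pi_I_int, neg_one_zpow_sq]

/-- The key identity `θ₃(τ) θ₄(τ) = θ₄(2τ)² = θ₃(2τ+1)²`. -/
private lemma theta_mul {τ : ℂ} (hτ : 0 < τ.im) :
    jacobiTheta τ * jacobiTheta (τ + 1) = jacobiTheta (2 * τ + 1) ^ 2 := by
  set f : ℤ → ℂ := fun n => cexp (π * I * (n : ℂ) ^ 2 * τ) with hf_def
  set g : ℤ → ℂ := fun n => cexp (π * I * (n : ℂ) ^ 2 * (τ + 1)) with hg_def
  set u : ℤ → ℂ := fun n => cexp (π * I * (n : ℂ) ^ 2 * (2 * τ + 1)) with hu_def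
  have hτ1 : 0 < (τ + 1).im := by simpa using hτ
  have hτ2 : 0 < (2 * τ + 1).im := by
    have : (2 * τ + 1).im = 2 * τ.im := by simp
    rw [this]; positivity
  have hf : Summable fun n => ‖f n‖ := summable_norm_theta hτ
  have hg : Summable fun n => ‖g n‖ := summable_norm_theta hτ1
  have hu : Summable fun n => ‖u n‖ := summable_norm_theta hτ2
  set H : ℤ × ℤ → ℂ := fun p => f p.1 * g p.2 with hH_def
  have hH : Summable H := summable_mul_of_summable_norm hf hg
  set E : Set (ℤ × ℤ) := {p | Even (p.1 + p.2)} with hE_def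
  -- swap kills the odd part
  have key1 : ∀ r s : ℤ, ¬ Even (r + s) → f s * g r = -(f r * g s) := by
    intro r s hrs
    rw [hg_def]
    simp only
    rw [g_eq τ r, g_eq τ s]
    have hsign : (-1 : ℂ) ^ r = -(-1 : ℂ) ^ s := by
      rcases Int.even_or_odd r with hr | hr <;> rcases Int.even_or_odd s with hs | hs
      · exact absurd (hr.add hs) hrs
      · rw [hr.neg_one_zpow, hs.neg_one_zpow, neg_neg]
      · rw [hr.neg_one_zpow, hs.neg_one_zpow]
      · exact absurd (hr.add_odd hs) hrs
    rw [hsign]; ring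
  -- two-variable to one-variable reindexing on the even part
  have key2 : ∀ a b : ℤ, f (a + b) * g (a - b) = u a * u b := by
    intro a b
    rw [hf_def, hg_def, hu_def]
    simp only
    rw [← Complex.exp_add, ← Complex.exp_add]
    rw [show (π : ℂ) * I * ((a : ℤ) + b : ℤ) ^ 2 * τ + π * I * ((a : ℤ) - b : ℤ) ^ 2 * (τ + 1)
        = (π * I * (a : ℂ) ^ 2 * (2 * τ + 1) + π * I * (b : ℂ) ^ 2 * (2 * τ + 1))
          + ((-(a * b) : ℤ) : ℂ) * (2 * π * I) by push_cast; ring,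
      Complex.exp_add, Complex.exp_int_mul_two_pi_mul_I, mul_one]
  -- the equivalence ℤ² ≃ E
  let ψ : (ℤ × ℤ) ≃ E :=
    { toFun := fun q => ⟨(q.1 + q.2, q.1 - q.2), ⟨q.1, by dsimp; ring⟩⟩
      invFun := fun p => ((p.1.1 + p.1.2) / 2, (p.1.1 - p.1.2) / 2)
      left_inv := fun q => by
        obtain ⟨a, b⟩ := q
        simp only [Prod.mk.injEq]
        omega
      right_inv := fun p => by
        obtain ⟨⟨r, s⟩, k, hk⟩ := p
        apply Subtype.ext
        simp only [Prod.mk.injEq]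
        omega }
  -- swap equivalence on Eᶜ
  let σ : (↥(Eᶜ)) ≃ (↥(Eᶜ)) :=
    (Equiv.prodComm ℤ ℤ).subtypeEquiv (fun p => by
      simp only [Set.mem_compl_iff, hE_def, Set.mem_setOf_eq, Equiv.prodComm_apply, Prod.fst_swap,
        Prod.snd_swap]
      rw [add_comm])
  have hodd : ∑' p : ↥(Eᶜ), H ↑p = 0 := by
    have h1 : ∑' p : ↥(Eᶜ), H ↑(σ p) = ∑' p : ↥(Eᶜ), H ↑p := σ.tsum_eq fun p : ↥(Eᶜ) => H ↑p
    have h2 : ∀ p : ↥(Eᶜ), H ↑(σ p) = -(H ↑p) := by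
      rintro ⟨⟨r, s⟩, hp⟩
      have hp' : ¬ Even (r + s) := hp
      exact key1 r s hp'
    rw [tsum_congr h2, tsum_neg] at h1
    exact add_self_eq_zero.mp (by linear_combination -h1)
  have heven : ∑' p : ↥E, H ↑p = ∑' q : ℤ × ℤ, u q.1 * u q.2 := by
    rw [← ψ.tsum_eq fun p : ↥E => H ↑p]
    exact tsum_congr fun q => key2 q.1 q.2
  calc jacobiTheta τ * jacobiTheta (τ + 1)
      = (∑' n : ℤ, f n) * (∑' n : ℤ, g n) := rfl
    _ = ∑' p : ℤ × ℤ, H p := tsum_mul_tsum_of_summable_norm hf hg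
    _ = ∑' p : ↥E, H ↑p + ∑' p : ↥(Eᶜ), H ↑p :=
        (Summable.tsum_add_tsum_compl (hH.subtype E) (hH.subtype Eᶜ)).symm
    _ = ∑' q : ℤ × ℤ, u q.1 * u q.2 := by rw [hodd, heven, add_zero]
    _ = (∑' n : ℤ, u n) * (∑' n : ℤ, u n) := (tsum_mul_tsum_of_summable_norm hu hu).symm
    _ = jacobiTheta (2 * τ + 1) ^ 2 := (sq _).symm

private lemma theta_ne_zero_of_one_le {τ : ℂ} (hτ : 1 ≤ τ.im) : jacobiTheta τ ≠ 0 := by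
  intro h
  have him : 0 < τ.im := lt_of_lt_of_le one_pos hτ
  have hb := norm_jacobiTheta_sub_one_le him
  rw [h, zero_sub, norm_neg, norm_one] at hb
  set r := rexp (-π * τ.im) with hr_def
  have hrpos : 0 < r := Real.exp_pos _
  have hr14 : r ≤ 1 / 4 := by
    have h3 : (3 : ℝ) ≤ π * τ.im := by nlinarith [Real.pi_gt_three]
    have h4 : r ≤ rexp (-3) := Real.exp_le_exp.mpr (by linarith)
    have h5 : (4 : ℝ) ≤ rexp 3 := by linarith [Real.add_one_le_exp 3]
    have h6 : rexp (-3) ≤ 1 / 4 := by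
      rw [Real.exp_neg]
      rw [inv_le_comm₀ (Real.exp_pos 3) (by norm_num)]
      linarith
    linarith
  have h1r : (0 : ℝ) < 1 - r := by linarith
  rw [div_mul_eq_mul_div, le_div_iff₀ h1r] at hb
  linarith

private lemma theta_ne_zero {τ : ℂ} (hτ : 0 < τ.im) : jacobiTheta τ ≠ 0 := by
  intro h0
  have key : ∀ k : ℕ, jacobiTheta ((2 : ℂ) ^ k * (τ + 1) - 1) = 0 := by
    intro k
    induction k with
    | zero => simpa using h0
    | succ k ih =>
      set σ := (2 : ℂ) ^ k * (τ + 1) - 1 with hσ_def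
      have him : 0 < σ.im := by
        have h2 : ((2 : ℂ) ^ k) = (((2 : ℝ) ^ k : ℝ) : ℂ) := by push_cast; ring
        have : σ.im = (2 : ℝ) ^ k * τ.im := by
          rw [hσ_def, h2, Complex.sub_im, Complex.im_ofReal_mul, Complex.one_im, sub_zero,
            Complex.add_im, Complex.one_im, add_zero]
        rw [this]
        positivity
      have hid := theta_mul him
      rw [ih, zero_mul] at hid
      have h21 : jacobiTheta (2 * σ + 1) = 0 := by
        have := hid.symm
        exact pow_eq_zero_iff two_ne_zero |>.mp this
      have harg : (2 : ℂ) ^ (k + 1) * (τ + 1) - 1 = 2 * σ + 1 := by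
        rw [hσ_def]; ring
      rw [harg]
      exact h21
  obtain ⟨k, hk⟩ := pow_unbounded_of_one_lt (τ.im)⁻¹ (one_lt_two : (1 : ℝ) < 2)
  have hone : 1 ≤ ((2 : ℂ) ^ k * (τ + 1) - 1).im := by
    have h2 : ((2 : ℂ) ^ k) = (((2 : ℝ) ^ k : ℝ) : ℂ) := by push_cast; ring
    have himeq : ((2 : ℂ) ^ k * (τ + 1) - 1).im = (2 : ℝ) ^ k * τ.im := by
      rw [h2, Complex.sub_im, Complex.im_ofReal_mul, Complex.one_im, sub_zero,
        Complex.add_im, Complex.one_im, add_zero]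
    rw [himeq]
    rw [inv_lt_iff_one_lt_mul₀ hτ] at hk
    nlinarith
  exact theta_ne_zero_of_one_le hone (key k)

end JacobiThetaNeZero

/-- The Jacobi theta function `θ(τ) = Σ_{n∈ℤ} e^{2πi n² τ}` is non-vanishing on the
upper half-plane. -/
theorem jacobi_theta_ne_zero (τ : ℂ) (hτ : 0 < τ.im) :
    (∑' n : ℤ, Complex.exp (2 * Real.pi * Complex.I * (n : ℂ) ^ 2 * τ)) ≠ 0 := by
  have h2 : 0 < (2 * τ).im := by
    have : (2 * τ).im = 2 * τ.im := by simp
    rw [this]; positivity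
  have h := JacobiThetaNeZero.theta_ne_zero h2
  have heq : (∑' n : ℤ, Complex.exp (2 * Real.pi * Complex.I * (n : ℂ) ^ 2 * τ))
      = jacobiTheta (2 * τ) := by
    unfold jacobiTheta
    exact tsum_congr fun n => by ring_nf
  rw [heq]
  exact h
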